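/- Let α > 0, let μ : ℝ → ℝ be continuous and nonnegative, let b₁ > 0 be a constant, and let φ : [0,∞) → ℝ be bounded on (0,α]. Let n be the explicit characteristic solution of the McKendrick equation with boundary condition n(0,t) = b₁·n(α,t) and initial data φ. If log b₁ < ∫₀^α μ(s) ds, then for every fixed a ≥ 0, n(a,t) → 0 as t → ∞. -/
import Mathlib


open MeasureTheory Real Set Filter

/-- Theorem 2.5 c: if `log b₁ < ∫₀^α μ(s) ds` (Lotka growth rate
`r < 1`) and the initial data `φ` is bounded on `(0,α]`, then for every fixed
`a ≥ 0` the characteristic solution satisfies `n(a,t) → 0` as `t → ∞`. -/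
theorem mckendrick_one_age_class_extinction_when_subcritical
    (α : ℝ) (hα : 0 < α)
    (μ : ℝ → ℝ) (hμc : Continuous μ) (hμ0 : ∀ x, 0 ≤ μ x)
    (b₁ : ℝ) (hb₁ : 0 < b₁)
    (φ : ℝ → ℝ)
    (hφbd : ∃ M : ℝ, ∀ a ∈ Set.Ioc (0:ℝ) α, |φ a| ≤ M)
    (n : ℝ → ℝ → ℝ)
    (hn₁ : ∀ a t : ℝ, 0 ≤ t → t < a →
      n a t = φ (a - t) * Real.exp (-(∫ s in (0:ℝ)..t, μ (s + a - t))))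
    (hn₂ : ∀ a t : ℝ, 0 ≤ a → a ≤ t →
      ∀ m : ℕ, (m : ℤ) = ⌊(t - a) / α⌋ + 1 →
      n a t = b₁ ^ m * φ ((m : ℝ) * α + a - t) *
        Real.exp (-(∫ s in (0:ℝ)..(t - a - ((m : ℝ) - 1) * α),
          μ (s + (m : ℝ) * α + a - t))) *
        Real.exp (-(((m : ℝ) - 1) * ∫ s in (0:ℝ)..α, μ s)) *
        Real.exp (-(∫ s in (0:ℝ)..a, μ s)))
    (hsub : Real.log b₁ < ∫ s in (0:ℝ)..α, μ s) :
    ∀ a : ℝ, 0 ≤ a →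
      Filter.Tendsto (fun t => n a t) Filter.atTop (nhds 0) := by
  obtain ⟨M, hM⟩ := hφbd
  have hM0 : 0 ≤ M := le_trans (abs_nonneg _) (hM α ⟨hα, le_refl _⟩)
  set I : ℝ := ∫ s in (0:ℝ)..α, μ s with hIdef
  set r : ℝ := b₁ * Real.exp (-I) with hrdef
  have hr0 : 0 < r := mul_pos hb₁ (Real.exp_pos _)
  have hr1 : r < 1 := by
    have : r = Real.exp (Real.log b₁ - I) := by
      rw [sub_eq_add_neg, Real.exp_add, Real.exp_log hb₁]
    rw [this]
    exact Real.exp_lt_one_iff.mpr (sub_neg.mpr hsub)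
  intro a ha
  set C : ℝ := M * b₁ / r with hCdef
  apply squeeze_zero_norm' (a := fun t => C * r ^ ((t - a) / α))
  · filter_upwards [eventually_ge_atTop a] with t ht
    have hta : 0 ≤ t - a := sub_nonneg.mpr ht
    have hfl0 : 0 ≤ ⌊(t - a) / α⌋ := Int.floor_nonneg.mpr (div_nonneg hta hα.le)
    set k : ℕ := (⌊(t - a) / α⌋).toNat with hkdef
    have hk : (k : ℤ) = ⌊(t - a) / α⌋ := Int.toNat_of_nonneg hfl0
    have hkR : (k : ℝ) = ((⌊(t - a) / α⌋ : ℤ) : ℝ) := by exact_mod_cast hk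
    have hkle : (k : ℝ) ≤ (t - a) / α := by rw [hkR]; exact Int.floor_le _
    have hklt : (t - a) / α < (k : ℝ) + 1 := by rw [hkR]; exact Int.lt_floor_add_one _
    have hkle' : (k : ℝ) * α ≤ t - a := by
      rw [← le_div_iff₀ hα]; exact hkle
    have hklt' : t - a < ((k : ℝ) + 1) * α := by
      rw [← div_lt_iff₀ hα]; exact hklt
    have heq := hn₂ a t ha ht (k + 1) (by push_cast; rw [hk])
    have hm1 : ((k + 1 : ℕ) : ℝ) - 1 = (k : ℝ) := by push_cast; ring
    set u : ℝ := t - a - ((((k : ℕ) + 1 : ℕ) : ℝ) - 1) * α with hudef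
    have hu : u = t - a - (k : ℝ) * α := by rw [hudef, hm1]
    have hu0 : 0 ≤ u := by rw [hu]; linarith
    have huα : u < α := by rw [hu]; nlinarith
    have hx : ((((k : ℕ) + 1 : ℕ) : ℝ) * α + a - t) ∈ Set.Ioc (0:ℝ) α := by
      push_cast
      constructor
      · nlinarith
      · nlinarith
    have he1 : Real.exp (-(∫ s in (0:ℝ)..u, μ (s + (((k : ℕ) + 1 : ℕ) : ℝ) * α + a - t))) ≤ 1 := by
      rw [Real.exp_le_one_iff, neg_nonpos]
      exact intervalIntegral.integral_nonneg hu0 (fun s _ => hμ0 _)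
    have he3 : Real.exp (-(∫ s in (0:ℝ)..a, μ s)) ≤ 1 := by
      rw [Real.exp_le_one_iff, neg_nonpos]
      exact intervalIntegral.integral_nonneg ha (fun s _ => hμ0 _)
    have he2 : Real.exp (-(((((k : ℕ) + 1 : ℕ) : ℝ) - 1) * I)) = Real.exp (-I) ^ k := by
      rw [hm1, ← Real.exp_nat_mul]
      ring_nf
    rw [heq]
    have hφx : |φ ((((k : ℕ) + 1 : ℕ) : ℝ) * α + a - t)| ≤ M := hM _ hx
    have hstep : ‖b₁ ^ (k + 1) * φ ((((k : ℕ) + 1 : ℕ) : ℝ) * α + a - t) *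
        Real.exp (-(∫ s in (0:ℝ)..u, μ (s + (((k : ℕ) + 1 : ℕ) : ℝ) * α + a - t))) *
        Real.exp (-(((((k : ℕ) + 1 : ℕ) : ℝ) - 1) * I)) *
        Real.exp (-(∫ s in (0:ℝ)..a, μ s))‖ ≤ M * b₁ * r ^ k := by
      rw [Real.norm_eq_abs]
      rw [abs_mul, abs_mul, abs_mul, abs_mul]
      rw [abs_of_pos (pow_pos hb₁ _), abs_of_pos (Real.exp_pos _),
        abs_of_pos (Real.exp_pos _), abs_of_pos (Real.exp_pos _)]
      have hb₁k : b₁ ^ (k + 1) = b₁ * b₁ ^ k := by ring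
      calc b₁ ^ (k + 1) * |φ ((((k : ℕ) + 1 : ℕ) : ℝ) * α + a - t)| *
            Real.exp (-(∫ s in (0:ℝ)..u, μ (s + (((k : ℕ) + 1 : ℕ) : ℝ) * α + a - t))) *
            Real.exp (-(((((k : ℕ) + 1 : ℕ) : ℝ) - 1) * I)) *
            Real.exp (-(∫ s in (0:ℝ)..a, μ s))
          ≤ b₁ ^ (k + 1) * M * 1 * (Real.exp (-I) ^ k) * 1 := by
            rw [← he2]
            gcongr <;> positivity
        _ = M * b₁ * r ^ k := by
            rw [hrdef, mul_pow, hb₁k]; ring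
    refine hstep.trans ?_
    have hpow : r ^ k = r ^ ((k : ℝ)) := (Real.rpow_natCast r k).symm
    have hle : r ^ ((k : ℝ)) ≤ r ^ ((t - a) / α - 1) :=
      Real.rpow_le_rpow_of_exponent_ge hr0 hr1.le (by linarith)
    have hsubr : r ^ ((t - a) / α - 1) = r ^ ((t - a) / α) / r := by
      rw [Real.rpow_sub hr0, Real.rpow_one]
    calc M * b₁ * r ^ k = M * b₁ * r ^ ((k : ℝ)) := by rw [hpow]
      _ ≤ M * b₁ * (r ^ ((t - a) / α) / r) := by
          rw [← hsubr]; exact mul_le_mul_of_nonneg_left hle (by positivity)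
      _ = C * r ^ ((t - a) / α) := by rw [hCdef]; field_simp
  · have h1 : Filter.Tendsto (fun t : ℝ => (t - a) / α) Filter.atTop Filter.atTop := by
      apply Filter.Tendsto.atTop_div_const hα
      exact tendsto_atTop_add_const_right _ (-a) tendsto_id |>.congr (fun x => by simp [id, sub_eq_add_neg, add_comm])
    have h2 : Filter.Tendsto (fun y : ℝ => r ^ y) Filter.atTop (nhds 0) :=
      tendsto_rpow_atTop_of_base_lt_one r (by linarith) hr1
    have := (h2.comp h1).const_mul C
    simpa using this
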